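/- In the Greedy 2-choice process on 4 bins starting from a state where all bin loads are within k of each other, after ck insertions (c a sufficiently large constant) all bin loads are within O(log k) of each other with probability 1 − 1/poly(k). -/

import Mathlib

/-!
The potential `Φ(ℓ) = (∑ᵢ 2^ℓᵢ) (∑ᵢ 2^-ℓᵢ) = ∑ᵢⱼ 2^(ℓᵢ - ℓⱼ)` contracts in expectation under a
Greedy step on four bins: averaged over the 12 ordered pairs, `𝔼 Φ' ≤ (11/12) Φ + 40/12`.
Loads within `k` of each other give `Φ₀ ≤ 16 · 2^k`, and `(11/12)^(8k) · 2^k ≤ 1`, so after `8k`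
steps `𝔼 Φ ≤ 56`. A load gap above `K log k` forces `Φ ≥ 2^gap ≥ k^(γ+1)` once `K log 2 ≥ γ + 1`,
and by Markov's inequality this has probability at most `56 k^-(γ+1) ≤ k^-γ` for `k ≥ 56`.
-/

/-- A uniformly random pair of distinct bins among 4 bins. -/
def DistinctPair : Type := {p : Fin 4 × Fin 4 // p.1 ≠ p.2}

instance : Nonempty DistinctPair := ⟨⟨(0, 1), by decide⟩⟩

instance : Fintype DistinctPair := by unfold DistinctPair; infer_instance

/-- One Greedy insertion: the ball goes to the less loaded of its two bins. -/
def greedyStep (ℓ : Fin 4 → ℕ) (p : Fin 4 × Fin 4) : Fin 4 → ℕ :=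
  let b := if ℓ p.1 ≤ ℓ p.2 then p.1 else p.2
  Function.update ℓ b (ℓ b + 1)

/-- Greedy run: process the list of pairs in order. -/
def greedyRun (ℓ₀ : Fin 4 → ℕ) (hs : List (Fin 4 × Fin 4)) : Fin 4 → ℕ :=
  hs.foldl greedyStep ℓ₀

open Finset Function

theorem sum_foldl_ofFn_le {α β : Type*} [Fintype β] (f : α → β → α) (V : α → ℝ) {r C : ℝ}
    (hr : 0 ≤ r) (hV : ∀ a, ∑ b, V (f a b) ≤ r * V a + (Fintype.card β - r) * C) :
    ∀ (n : ℕ) (a : α), ∑ h : Fin n → β, V ((List.ofFn h).foldl f a) ≤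
      r ^ n * V a + (Fintype.card β ^ n - r ^ n) * C := by
  intro n
  induction n with
  | zero => simp
  | succ n ih =>
    intro a
    rw [← (Fin.consEquiv fun _ => β).sum_comp, Fintype.sum_prod_type]
    simp only [Fin.consEquiv, Equiv.coe_fn_mk, List.ofFn_succ, Fin.cons_zero, Fin.cons_succ,
      List.foldl_cons]
    calc ∑ b, ∑ h : Fin n → β, V ((List.ofFn h).foldl f (f a b))
        ≤ ∑ b, (r ^ n * V (f a b) + (Fintype.card β ^ n - r ^ n) * C) :=
          sum_le_sum fun b _ => ih (f a b)
      _ = r ^ n * ∑ b, V (f a b) + Fintype.card β * ((Fintype.card β ^ n - r ^ n) * C) := by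
          rw [sum_add_distrib, mul_sum, sum_const, card_univ, nsmul_eq_mul]
      _ ≤ r ^ n * (r * V a + (Fintype.card β - r) * C)
            + Fintype.card β * ((Fintype.card β ^ n - r ^ n) * C) := by
          gcongr; exact hV a
      _ = r ^ (n + 1) * V a + (Fintype.card β ^ (n + 1) - r ^ (n + 1)) * C := by ring

theorem ofReal_one_sub_le_uniform_of_sum_le {Ω : Type*} [Fintype Ω] [Nonempty Ω] (S : Set Ω)
    (f : Ω → ℝ) {t ε : ℝ} (hf : ∀ ω, 0 ≤ f ω) (ht : 0 < t) (hS : ∀ ω ∉ S, t ≤ f ω)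
    (hsum : ∑ ω, f ω ≤ ε * t * Fintype.card Ω) :
    ENNReal.ofReal (1 - ε) ≤ (PMF.uniformOfFintype Ω).toOuterMeasure S := by
  classical
  have hN : (0 : ℝ) < Fintype.card Ω := by exact_mod_cast Fintype.card_pos
  have hcompl : (Fintype.card (Sᶜ : Set Ω) : ℝ) * t ≤ ε * t * Fintype.card Ω := by
    calc (Fintype.card (Sᶜ : Set Ω) : ℝ) * t = ∑ _ω ∈ Sᶜ.toFinset, t := by
          rw [sum_const, Set.toFinset_card, nsmul_eq_mul]
      _ ≤ ∑ ω ∈ Sᶜ.toFinset, f ω := sum_le_sum fun ω hω => hS ω (by simpa using hω)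
      _ ≤ ∑ ω, f ω := sum_le_sum_of_subset_of_nonneg (subset_univ _) fun ω _ _ => hf ω
      _ ≤ ε * t * Fintype.card Ω := hsum
  have hsplit : (Fintype.card S : ℝ) + Fintype.card (Sᶜ : Set Ω) = Fintype.card Ω := by
    have := card_add_card_compl S.toFinset
    rw [← Set.toFinset_compl, Set.toFinset_card, Set.toFinset_card] at this
    exact_mod_cast this
  rw [PMF.toOuterMeasure_uniformOfFintype_apply, ← ENNReal.ofReal_natCast,
    ← ENNReal.ofReal_natCast, ← ENNReal.ofReal_div_of_pos hN]
  refine ENNReal.ofReal_le_ofReal ((le_div_iff₀ hN).2 ?_)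
  nlinarith

section Potential

variable {ι : Type*} [Fintype ι]

noncomputable def expSum (ℓ : ι → ℕ) : ℝ := ∑ i, (2 : ℝ) ^ ℓ i

noncomputable def invExpSum (ℓ : ι → ℕ) : ℝ := ∑ i, ((2 : ℝ) ^ ℓ i)⁻¹

noncomputable def potential (ℓ : ι → ℕ) : ℝ := expSum ℓ * invExpSum ℓ

theorem potential_eq_sum_sum (ℓ : ι → ℕ) :
    potential ℓ = ∑ i, ∑ j, (2 : ℝ) ^ ℓ i / 2 ^ ℓ j := by
  simp only [potential, expSum, invExpSum, sum_mul_sum, div_eq_mul_inv]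

theorem potential_nonneg (ℓ : ι → ℕ) : 0 ≤ potential ℓ := by
  unfold potential expSum invExpSum; positivity

theorem potential_comp_equiv (ℓ : ι → ℕ) (σ : ι ≃ ι) : potential (ℓ ∘ σ) = potential ℓ := by
  simp only [potential, expSum, invExpSum, comp_apply, σ.sum_comp (fun i => (2 : ℝ) ^ ℓ i),
    σ.sum_comp (fun i => ((2 : ℝ) ^ ℓ i)⁻¹)]

theorem two_pow_div_two_pow_le_potential (ℓ : ι → ℕ) (i j : ι) :
    (2 : ℝ) ^ ℓ i / 2 ^ ℓ j ≤ potential ℓ := by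
  rw [potential_eq_sum_sum]
  calc (2 : ℝ) ^ ℓ i / 2 ^ ℓ j ≤ ∑ j', (2 : ℝ) ^ ℓ i / 2 ^ ℓ j' :=
        single_le_sum (f := fun j' => (2 : ℝ) ^ ℓ i / 2 ^ ℓ j') (fun _ _ => by positivity)
          (mem_univ j)
    _ ≤ ∑ i', ∑ j', (2 : ℝ) ^ ℓ i' / 2 ^ ℓ j' :=
        single_le_sum (f := fun i' => ∑ j', (2 : ℝ) ^ ℓ i' / 2 ^ ℓ j')
          (fun _ _ => by positivity) (mem_univ i)

theorem two_rpow_abs_sub_le_potential (ℓ : ι → ℕ) (i j : ι) :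
    (2 : ℝ) ^ |(ℓ i : ℝ) - ℓ j| ≤ potential ℓ := by
  wlog hji : ℓ j ≤ ℓ i generalizing i j
  · rw [abs_sub_comm]; exact this j i (by omega)
  rw [abs_of_nonneg (by simpa using hji), Real.rpow_sub two_pos, Real.rpow_natCast,
    Real.rpow_natCast]
  exact two_pow_div_two_pow_le_potential ℓ i j

theorem rpow_le_potential_of_mul_log_lt_abs_sub (ℓ : ι → ℕ) {i j : ι} {x e K : ℝ} (hx : 1 ≤ x)
    (he : e ≤ K * Real.log 2) (hgap : K * Real.log x < |(ℓ i : ℝ) - ℓ j|) :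
    x ^ e ≤ potential ℓ := by
  refine le_trans ?_ (two_rpow_abs_sub_le_potential ℓ i j)
  rw [Real.rpow_def_of_pos (by linarith), Real.rpow_def_of_pos two_pos, Real.exp_le_exp]
  nlinarith [Real.log_nonneg hx, Real.log_pos one_lt_two]

theorem potential_le_of_forall_le_add (ℓ : ι → ℕ) (k : ℕ) (h : ∀ i j, ℓ i ≤ ℓ j + k) :
    potential ℓ ≤ Fintype.card ι ^ 2 * 2 ^ k := by
  have hij : ∀ i j, (2 : ℝ) ^ ℓ i / 2 ^ ℓ j ≤ 2 ^ k := fun i j => by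
    rw [div_le_iff₀ (by positivity), ← pow_add, add_comm]
    exact pow_le_pow_right₀ one_le_two (h i j)
  calc potential ℓ ≤ ∑ _i : ι, ∑ _j : ι, (2 : ℝ) ^ k := by
        rw [potential_eq_sum_sum]; exact sum_le_sum fun i _ => sum_le_sum fun j _ => hij i j
    _ = Fintype.card ι ^ 2 * 2 ^ k := by simp [sq, mul_assoc]

variable [DecidableEq ι]

theorem expSum_update_succ (ℓ : ι → ℕ) (b : ι) :
    expSum (update ℓ b (ℓ b + 1)) = expSum ℓ + 2 ^ ℓ b := by
  simp only [expSum, apply_update (fun _ n => (2 : ℝ) ^ n), sum_update_of_mem (mem_univ b)]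
  rw [← add_sum_erase _ _ (mem_univ b), sdiff_singleton_eq_erase, pow_succ]
  ring

theorem invExpSum_update_succ (ℓ : ι → ℕ) (b : ι) :
    invExpSum (update ℓ b (ℓ b + 1)) = invExpSum ℓ - (2 ^ ℓ b)⁻¹ / 2 := by
  simp only [invExpSum, apply_update (fun _ n => ((2 : ℝ) ^ n)⁻¹), sum_update_of_mem (mem_univ b)]
  rw [← add_sum_erase _ _ (mem_univ b), sdiff_singleton_eq_erase, pow_succ, mul_inv]
  ring

theorem potential_update_succ (ℓ : ι → ℕ) (b : ι) :
    potential (update ℓ b (ℓ b + 1)) =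
      potential ℓ + 2 ^ ℓ b * invExpSum ℓ - expSum ℓ / 2 ^ ℓ b / 2 - 1 / 2 := by
  have : (2 : ℝ) ^ ℓ b ≠ 0 := by positivity
  rw [potential, potential, expSum_update_succ, invExpSum_update_succ]
  field_simp
  ring

end Potential

theorem card_distinctPair : Fintype.card DistinctPair = 12 := by decide

theorem sum_distinctPair_comp_perm (F : Fin 4 × Fin 4 → ℝ) (σ : Equiv.Perm (Fin 4)) :
    ∑ p : DistinctPair, F (σ p.val.1, σ p.val.2) = ∑ p : DistinctPair, F p.val :=
  ((σ.prodCongr σ).subtypeEquiv fun p => by simp).sum_comp (fun p : DistinctPair => F p.val)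

theorem sum_distinctPair_min_of_monotone {M : Type*} [AddCommMonoid M] (g : ℕ → M)
    {ℓ : Fin 4 → ℕ} (hℓ : Monotone ℓ) :
    ∑ p : DistinctPair, g (min (ℓ p.val.1) (ℓ p.val.2)) =
      6 • g (ℓ 0) + 4 • g (ℓ 1) + 2 • g (ℓ 2) := by
  have h01 : ℓ 0 ≤ ℓ 1 := hℓ (by decide)
  have h02 : ℓ 0 ≤ ℓ 2 := hℓ (by decide)
  have h03 : ℓ 0 ≤ ℓ 3 := hℓ (by decide)
  have h12 : ℓ 1 ≤ ℓ 2 := hℓ (by decide)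
  have h13 : ℓ 1 ≤ ℓ 3 := hℓ (by decide)
  have h23 : ℓ 2 ≤ ℓ 3 := hℓ (by decide)
  show ∑ p : {p : Fin 4 × Fin 4 // p.1 ≠ p.2}, _ = _
  rw [← sum_subtype (univ.filter fun p : Fin 4 × Fin 4 => p.1 ≠ p.2) (by simp)
    (fun p => g (min (ℓ p.1) (ℓ p.2))), sum_filter, Fintype.sum_prod_type]
  simp only [ne_eq, ite_not, Fin.sum_univ_four, Fin.isValue, ↓reduceIte, zero_ne_one, h01,
    inf_of_le_left, zero_add, Fin.reduceEq, h02, h03, one_ne_zero, inf_of_le_right, add_zero, h12,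
    h13, h23]
  abel

theorem greedyStep_comp_perm (ℓ : Fin 4 → ℕ) (σ : Equiv.Perm (Fin 4)) (p : Fin 4 × Fin 4) :
    greedyStep (ℓ ∘ σ) p = greedyStep ℓ (σ p.1, σ p.2) ∘ σ := by
  by_cases h : ℓ (σ p.1) ≤ ℓ (σ p.2) <;>
    simp [greedyStep, h, ← update_comp_eq_of_injective _ σ.injective]

theorem potential_greedyStep (ℓ : Fin 4 → ℕ) (p : Fin 4 × Fin 4) :
    potential (greedyStep ℓ p) =
      potential ℓ + 2 ^ min (ℓ p.1) (ℓ p.2) * invExpSum ℓ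
        - expSum ℓ / 2 ^ min (ℓ p.1) (ℓ p.2) / 2 - 1 / 2 := by
  unfold greedyStep
  split_ifs with h
  · rw [potential_update_succ, min_eq_left h]
  · rw [potential_update_succ, min_eq_right (le_of_not_ge h)]

theorem four_bin_drift_bound {a b c d : ℝ} (ha : 0 < a) (hab : a ≤ b) (hbc : b ≤ c)
    (hcd : c ≤ d) :
    (a⁻¹ + b⁻¹ + c⁻¹ + d⁻¹) * (6 * a + 4 * b + 2 * c)
      - (a + b + c + d) / 2 * (6 * a⁻¹ + 4 * b⁻¹ + 2 * c⁻¹)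
      + (a + b + c + d) * (a⁻¹ + b⁻¹ + c⁻¹ + d⁻¹) ≤ 40 := by
  have hb : 0 < b := ha.trans_le hab
  have hc : 0 < c := hb.trans_le hbc
  have hd : 0 < d := hc.trans_le hcd
  have key : (a⁻¹ + b⁻¹ + c⁻¹ + d⁻¹) * (6 * a + 4 * b + 2 * c)
      - (a + b + c + d) / 2 * (6 * a⁻¹ + 4 * b⁻¹ + 2 * c⁻¹)
      + (a + b + c + d) * (a⁻¹ + b⁻¹ + c⁻¹ + d⁻¹)
      = 10 + 5 * (a / b) + 6 * (a / c) + 7 * (a / d) + 4 * (b / c) + 5 * (b / d) + 3 * (c / d)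
        - 2 * ((d - b) / a) - (d - c) / b := by
    field_simp
    ring
  have hab' : a / b ≤ 1 := (div_le_one hb).2 hab
  have hac : a / c ≤ 1 := (div_le_one hc).2 (hab.trans hbc)
  have had : a / d ≤ 1 := (div_le_one hd).2 (hab.trans (hbc.trans hcd))
  have hbc' : b / c ≤ 1 := (div_le_one hc).2 hbc
  have hbd : b / d ≤ 1 := (div_le_one hd).2 (hbc.trans hcd)
  have hcd' : c / d ≤ 1 := (div_le_one hd).2 hcd
  have hdb : 0 ≤ (d - b) / a := div_nonneg (by linarith) ha.le
  have hdc : 0 ≤ (d - c) / b := div_nonneg (by linarith) hb.le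
  linarith

theorem sum_potential_greedyStep_le_of_monotone {ℓ : Fin 4 → ℕ} (hℓ : Monotone ℓ) :
    ∑ p : DistinctPair, potential (greedyStep ℓ p.val) ≤ 11 * potential ℓ + 40 := by
  simp only [potential_greedyStep]
  rw [sum_distinctPair_min_of_monotone
    (fun m => potential ℓ + 2 ^ m * invExpSum ℓ - expSum ℓ / 2 ^ m / 2 - 1 / 2) hℓ]
  have := four_bin_drift_bound (a := 2 ^ ℓ 0) (by positivity)
    (pow_le_pow_right₀ one_le_two (hℓ (by decide : (0 : Fin 4) ≤ 1)))
    (pow_le_pow_right₀ one_le_two (hℓ (by decide : (1 : Fin 4) ≤ 2)))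
    (pow_le_pow_right₀ one_le_two (hℓ (by decide : (2 : Fin 4) ≤ 3)))
  simp only [potential, expSum, invExpSum, Fin.sum_univ_four, nsmul_eq_mul] at this ⊢
  linear_combination this

theorem sum_potential_greedyStep_le (ℓ : Fin 4 → ℕ) :
    ∑ p : DistinctPair, potential (greedyStep ℓ p.val) ≤ 11 * potential ℓ + 40 := by
  have h := sum_potential_greedyStep_le_of_monotone (Tuple.monotone_sort ℓ)
  simp only [greedyStep_comp_perm, potential_comp_equiv] at h
  rwa [sum_distinctPair_comp_perm (fun p => potential (greedyStep ℓ p))] at h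

theorem greedyRun_ofFn_val {n : ℕ} (ℓ₀ : Fin 4 → ℕ) (h : Fin n → DistinctPair) :
    greedyRun ℓ₀ (List.ofFn fun t => (h t).val) =
      (List.ofFn h).foldl (fun ℓ p => greedyStep ℓ p.val) ℓ₀ := by
  show List.foldl greedyStep ℓ₀ (List.ofFn ((fun p : DistinctPair => p.val) ∘ h)) = _
  rw [← List.map_ofFn, List.foldl_map]

theorem sum_potential_greedyRun_le (n : ℕ) (ℓ₀ : Fin 4 → ℕ) :
    ∑ h : Fin n → DistinctPair, potential (greedyRun ℓ₀ (List.ofFn fun t => (h t).val)) ≤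
      11 ^ n * potential ℓ₀ + (12 ^ n - 11 ^ n) * 40 := by
  simp only [greedyRun_ofFn_val]
  convert sum_foldl_ofFn_le (fun ℓ (p : DistinctPair) => greedyStep ℓ p.val) potential
    (r := 11) (C := 40) (by norm_num) (fun ℓ => ?_) n ℓ₀ using 3 <;> rw [card_distinctPair]
  · norm_num
  · push_cast
    linarith [sum_potential_greedyStep_le ℓ]

theorem eleven_pow_mul_two_pow_le (k : ℕ) : (11 : ℝ) ^ (8 * k) * 2 ^ k ≤ 12 ^ (8 * k) := by
  rw [pow_mul, pow_mul, ← mul_pow]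
  exact pow_le_pow_left₀ (by norm_num) (by norm_num) k

theorem stmt15_general (γ : ℝ) :
    ∃ c K k₀ : ℕ, ∀ k : ℕ, k₀ ≤ k →
    ∀ ℓ₀ : Fin 4 → ℕ, (∀ i j, |(ℓ₀ i : ℤ) - (ℓ₀ j : ℤ)| ≤ (k : ℤ)) →
      ENNReal.ofReal (1 - (k : ℝ) ^ (-γ)) ≤
        (PMF.uniformOfFintype (Fin (c * k) → DistinctPair)).toOuterMeasure
          {h | ∀ i j : Fin 4,
            |((greedyRun ℓ₀ (List.ofFn (fun t => (h t).val)) i : ℕ) : ℝ) -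
              ((greedyRun ℓ₀ (List.ofFn (fun t => (h t).val)) j : ℕ) : ℝ)| ≤
            (K : ℝ) * Real.log k} := by
  refine ⟨8, ⌈(γ + 1) / Real.log 2⌉₊, 56, fun k hk ℓ₀ hℓ₀ => ?_⟩
  have hk56 : (56 : ℝ) ≤ k := by exact_mod_cast hk
  have hK : γ + 1 ≤ ⌈(γ + 1) / Real.log 2⌉₊ * Real.log 2 :=
    (div_le_iff₀ (Real.log_pos one_lt_two)).1 (Nat.le_ceil _)
  have hstart : potential ℓ₀ ≤ 16 * 2 ^ k := by
    refine (potential_le_of_forall_le_add ℓ₀ k fun i j => ?_).trans_eq (by norm_num)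
    have := abs_le.1 (hℓ₀ i j); omega
  refine ofReal_one_sub_le_uniform_of_sum_le (t := (k : ℝ) ^ (γ + 1)) _
    (fun h => potential (greedyRun ℓ₀ (List.ofFn fun t => (h t).val))) (fun _ => potential_nonneg _)
    (Real.rpow_pos_of_pos (by linarith) (γ + 1)) ?_ ?_
  · intro h hbad
    simp only [Set.mem_ofPred_eq, not_forall, not_le] at hbad
    obtain ⟨i, j, hij⟩ := hbad
    exact rpow_le_potential_of_mul_log_lt_abs_sub _ (by linarith) hK hij
  · have hpow : (k : ℝ) ^ (-γ) * (k : ℝ) ^ (γ + 1) = k := by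
      rw [← Real.rpow_add (by linarith)]; simp
    rw [hpow, Fintype.card_fun, card_distinctPair, Fintype.card_fin]
    calc _ ≤ (11 : ℝ) ^ (8 * k) * potential ℓ₀ + (12 ^ (8 * k) - 11 ^ (8 * k)) * 40 :=
          sum_potential_greedyRun_le _ ℓ₀
      _ ≤ 56 * 12 ^ (8 * k) := by
          nlinarith [eleven_pow_mul_two_pow_le k, pow_pos (by norm_num : (0 : ℝ) < 11) (8 * k)]
      _ ≤ k * ((12 : ℕ) ^ (8 * k) : ℕ) := by push_cast; gcongr

/-- on 4 bins, starting from loads within `k` of each other,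
after `ck` Greedy insertions (`c` a sufficiently large constant, pairs uniform
and distinct) all loads are within `O(log k)` of each other with probability
`1 − 1/poly(k)` (polynomial exponent `γ` of our choice). -/
theorem stmt15 (γ : ℝ) (hγ : 0 < γ) :
    ∃ c K k₀ : ℕ, ∀ k : ℕ, k₀ ≤ k →
    ∀ ℓ₀ : Fin 4 → ℕ, (∀ i j, |(ℓ₀ i : ℤ) - (ℓ₀ j : ℤ)| ≤ (k : ℤ)) →
      ENNReal.ofReal (1 - (k : ℝ) ^ (-γ)) ≤
        (PMF.uniformOfFintype (Fin (c * k) → DistinctPair)).toOuterMeasure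
          {h | ∀ i j : Fin 4,
            |((greedyRun ℓ₀ (List.ofFn (fun t => (h t).val)) i : ℕ) : ℝ) -
              ((greedyRun ℓ₀ (List.ofFn (fun t => (h t).val)) j : ℕ) : ℝ)| ≤
            (K : ℝ) * Real.log k} :=
  stmt15_general γ
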